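/- arXiv:1006.4641 — 2 statements merged into one kernel-verified Lean document; each statement's English description precedes it below -/
import Mathlib

section
/- Let (ε_k)_{k≥1} be i.i.d. nonnegative random variables with E(ε_1²) < ∞, mean μ > 0 and variance σ². Let X_n = ε_1 + … + ε_n, X_0 = X_{-1} = 0, ε_0 = 0, and D_n := Σ_{k=1}^n X_{k-2}² Σ_{k=1}^n ε_{k-1}² − (Σ_{k=1}^n X_{k-2} ε_{k-1})². Then n^{-4} D_n converges almost surely to μ²(4σ² + μ²)/12 as n → ∞. -/
/-!
By the strong law of large numbers, almost surely `X_n / n → μ` and `(1/n) ∑ ε_k² → σ² + μ²`.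
Both remaining sums in `D_n` are then deterministic functions of these averages: a cubic
Cesàro argument gives `∑_{k<n} X_k² ~ μ² n³ / 3`, and `2 ∑ X_k ε_k = X_n² - ∑ ε_k²` gives
`∑ X_k ε_k ~ μ² n² / 2`. Hence `n⁻⁴ D_n → (μ²/3)(σ² + μ²) - μ⁴/4 = μ²(4σ² + μ²)/12`.
-/

open MeasureTheory Filter ProbabilityTheory Topology Finset Asymptotics

lemma sum_range_natCast_sq (n : ℕ) :
    ∑ j ∈ range n, (j : ℝ) ^ 2 = n * (n - 1) * (2 * n - 1) / 6 := by
  induction n with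
  | zero => simp
  | succ n ih => rw [sum_range_succ, ih]; push_cast; ring

lemma tendsto_sum_range_natCast_sq_div_pow_three :
    Tendsto (fun n : ℕ => (∑ j ∈ range n, (j : ℝ) ^ 2) / (n : ℝ) ^ 3) atTop (𝓝 (1 / 3)) := by
  have h0 : Tendsto (fun n : ℕ => 1 / (n : ℝ)) atTop (𝓝 0) := tendsto_one_div_atTop_nhds_zero_nat
  have h : Tendsto (fun n : ℕ => (1 - 1 / (n : ℝ)) * (2 - 1 / (n : ℝ)) / 6) atTop
      (𝓝 ((1 - 0) * (2 - 0) / 6)) :=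
    ((tendsto_const_nhds.sub h0).mul (tendsto_const_nhds.sub h0)).div_const 6
  rw [show ((1 : ℝ) - 0) * (2 - 0) / 6 = 1 / 3 by norm_num] at h
  refine h.congr' ?_
  filter_upwards [eventually_ne_atTop 0] with n hn
  have hn : (n : ℝ) ≠ 0 := Nat.cast_ne_zero.2 hn
  rw [sum_range_natCast_sq]
  field_simp

lemma tendsto_sum_range_natCast_sq_atTop :
    Tendsto (fun n : ℕ => ∑ j ∈ range n, (j : ℝ) ^ 2) atTop atTop := by
  have h := tendsto_sum_range_natCast_sq_div_pow_three.pos_mul_atTop (by norm_num)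
    ((tendsto_pow_atTop three_ne_zero).comp tendsto_natCast_atTop_atTop)
  refine h.congr' ?_
  filter_upwards [eventually_ne_atTop 0] with n hn
  have hn : (n : ℝ) ^ 3 ≠ 0 := pow_ne_zero _ (Nat.cast_ne_zero.2 hn)
  exact div_mul_cancel₀ _ hn

lemma tendsto_sum_range_div_pow_three_of_tendsto_div_sq {b : ℕ → ℝ} {c : ℝ}
    (hb : Tendsto (fun j : ℕ => b j / (j : ℝ) ^ 2) atTop (𝓝 c)) :
    Tendsto (fun n : ℕ => (∑ j ∈ range n, b j) / (n : ℝ) ^ 3) atTop (𝓝 (c / 3)) := by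
  have hsq : (fun j : ℕ => b j - c * (j : ℝ) ^ 2) =o[atTop] fun j : ℕ => (j : ℝ) ^ 2 := by
    refine (isLittleO_iff_tendsto' ?_).2 ?_
    · filter_upwards [eventually_ne_atTop 0] with j hj hj0
      exact absurd hj0 (pow_ne_zero _ (Nat.cast_ne_zero.2 hj))
    · have h : Tendsto (fun j : ℕ => b j / (j : ℝ) ^ 2 - c) atTop (𝓝 0) := by
        simpa using hb.sub_const c
      refine h.congr' ?_
      filter_upwards [eventually_ne_atTop 0] with j hj
      have hj : (j : ℝ) ^ 2 ≠ 0 := pow_ne_zero _ (Nat.cast_ne_zero.2 hj)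
      field_simp
  have hcube : (fun n : ℕ => ∑ j ∈ range n, (j : ℝ) ^ 2) =O[atTop] fun n : ℕ => (n : ℝ) ^ 3 :=
    isBigO_of_div_tendsto_nhds (Eventually.of_forall fun n hn => by simp_all)
      _ tendsto_sum_range_natCast_sq_div_pow_three
  have hsum := (hsq.sum_range (fun j => sq_nonneg _)
    tendsto_sum_range_natCast_sq_atTop).trans_isBigO hcube
  have h := hsum.tendsto_div_nhds_zero.add
    (tendsto_sum_range_natCast_sq_div_pow_three.const_mul c)
  rw [zero_add, mul_one_div] at h
  refine h.congr fun n => ?_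
  rw [sum_sub_distrib, ← mul_sum]
  ring

lemma two_mul_sum_range_partialSum_mul {R : Type*} [CommRing R] (x : ℕ → R) (n : ℕ) :
    2 * ∑ j ∈ range n, (∑ i ∈ range j, x i) * x j
      = (∑ i ∈ range n, x i) ^ 2 - ∑ j ∈ range n, x j ^ 2 := by
  induction n with
  | zero => simp
  | succ n ih =>
    rw [sum_range_succ (fun j => (∑ i ∈ range j, x i) * x j), sum_range_succ (fun j => x j ^ 2),
      sum_range_succ x, mul_add, ih]
    ring

lemma tendsto_comp_sub_one_div_pow {f : ℕ → ℝ} {k : ℕ} {L : ℝ}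
    (hf : Tendsto (fun m : ℕ => f m / (m : ℝ) ^ k) atTop (𝓝 L)) :
    Tendsto (fun n : ℕ => f (n - 1) / (n : ℝ) ^ k) atTop (𝓝 L) := by
  rw [← tendsto_add_atTop_iff_nat 1]
  have hr : Tendsto (fun n : ℕ => ((n : ℝ) / (n + 1)) ^ k) atTop (𝓝 1) := by
    simpa using (tendsto_natCast_div_add_atTop (1 : ℝ)).pow k
  have h : Tendsto (fun n : ℕ => f n / (n : ℝ) ^ k * ((n : ℝ) / (n + 1)) ^ k) atTop (𝓝 L) := by
    simpa using hf.mul hr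
  refine h.congr' ?_
  filter_upwards [eventually_ne_atTop 0] with n hn
  have hn : (n : ℝ) ≠ 0 := Nat.cast_ne_zero.2 hn
  have hn1 : (n : ℝ) + 1 ≠ 0 := by positivity
  simp only [Nat.add_sub_cancel, Nat.cast_add, Nat.cast_one, div_pow]
  field_simp

section PartialSums

variable {e : ℕ → ℝ} {μ m₂ : ℝ}
  (h₁ : Tendsto (fun n : ℕ => (∑ i ∈ range n, e i) / n) atTop (𝓝 μ))
  (h₂ : Tendsto (fun n : ℕ => (∑ j ∈ range n, e j ^ 2) / n) atTop (𝓝 m₂))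
include h₁

lemma tendsto_sum_range_partialSum_sq_div_pow_three :
    Tendsto (fun n : ℕ => (∑ j ∈ range n, (∑ i ∈ range j, e i) ^ 2) / (n : ℝ) ^ 3) atTop
      (𝓝 (μ ^ 2 / 3)) :=
  tendsto_sum_range_div_pow_three_of_tendsto_div_sq ((h₁.pow 2).congr fun _ => div_pow _ _ 2)

include h₂

lemma tendsto_sum_range_partialSum_mul_div_sq :
    Tendsto (fun n : ℕ => (∑ j ∈ range n, (∑ i ∈ range j, e i) * e j) / (n : ℝ) ^ 2) atTop
      (𝓝 (μ ^ 2 / 2)) := by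
  have h := ((h₁.pow 2).sub (h₂.mul tendsto_one_div_atTop_nhds_zero_nat)).div_const 2
  rw [mul_zero, sub_zero] at h
  refine h.congr' ?_
  filter_upwards [eventually_ne_atTop 0] with n hn
  have hn : (n : ℝ) ≠ 0 := Nat.cast_ne_zero.2 hn
  rw [eq_div_iff (pow_ne_zero 2 hn), ← mul_div_cancel_left₀
    (∑ j ∈ range n, (∑ i ∈ range j, e i) * e j) (two_ne_zero (α := ℝ)),
    two_mul_sum_range_partialSum_mul]
  field_simp

theorem tendsto_det_div_pow_four :
    Tendsto (fun n : ℕ =>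
        ((∑ j ∈ range (n - 1), (∑ i ∈ range j, e i) ^ 2) * (∑ j ∈ range (n - 1), e j ^ 2)
          - (∑ j ∈ range (n - 1), (∑ i ∈ range j, e i) * e j) ^ 2) / (n : ℝ) ^ 4)
      atTop (𝓝 (μ ^ 2 / 3 * m₂ - (μ ^ 2 / 2) ^ 2)) := by
  refine tendsto_comp_sub_one_div_pow (f := fun m =>
    (∑ j ∈ range m, (∑ i ∈ range j, e i) ^ 2) * (∑ j ∈ range m, e j ^ 2)
      - (∑ j ∈ range m, (∑ i ∈ range j, e i) * e j) ^ 2) ?_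
  have h := ((tendsto_sum_range_partialSum_sq_div_pow_three h₁).mul h₂).sub
    ((tendsto_sum_range_partialSum_mul_div_sq h₁ h₂).pow 2)
  refine h.congr' ?_
  filter_upwards [eventually_ne_atTop 0] with m hm
  have hm : (m : ℝ) ≠ 0 := Nat.cast_ne_zero.2 hm
  field_simp

end PartialSums

lemma integral_sq_eq_of_integral_sub_sq {Ω : Type*} [MeasurableSpace Ω] {P : Measure Ω}
    [IsProbabilityMeasure P] {X : Ω → ℝ} (hX : MemLp X 2 P) {μ σ : ℝ}
    (hμ : ∫ ω, X ω ∂P = μ) (hσ : ∫ ω, (X ω - μ) ^ 2 ∂P = σ ^ 2) :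
    ∫ ω, X ω ^ 2 ∂P = σ ^ 2 + μ ^ 2 := by
  have h := variance_eq_sub hX
  rw [variance_eq_integral hX.aemeasurable, hμ, hσ] at h
  simp only [Pi.pow_apply] at h
  linarith

theorem stmt6_general {Ω : Type*} [MeasurableSpace Ω] (P : Measure Ω) [IsProbabilityMeasure P]
    (ε : ℕ → Ω → ℝ)
    (hindep : iIndepFun ε P)
    (hident : ∀ i, IdentDistrib (ε i) (ε 0) P P)
    (hL2 : Integrable (fun ω => (ε 0 ω)^2) P)
    (μ σ : ℝ) (hμ : ∫ ω, ε 0 ω ∂P = μ)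
    (hσ : ∫ ω, (ε 0 ω - μ)^2 ∂P = σ^2) :
    ∀ᵐ ω ∂P, Tendsto (fun n : ℕ =>
        ((∑ j ∈ Finset.range (n-1), (∑ i ∈ Finset.range j, ε i ω)^2)
            * (∑ j ∈ Finset.range (n-1), (ε j ω)^2)
          - (∑ j ∈ Finset.range (n-1), (∑ i ∈ Finset.range j, ε i ω) * ε j ω)^2) / (n:ℝ)^4)
      atTop (𝓝 (μ^2 * (4*σ^2 + μ^2) / 12)) := by
  have hmemLp : MemLp (ε 0) 2 P :=
    (memLp_two_iff_integrable_sq (hident 0).aemeasurable_fst.aestronglyMeasurable).2 hL2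
  have hsq : Measurable fun x : ℝ => x ^ 2 := measurable_id.pow_const 2
  have h₁ := strong_law_ae_real ε (hmemLp.integrable one_le_two)
    (fun i j hij => hindep.indepFun hij) hident
  have h₂ := strong_law_ae_real (fun i ω => ε i ω ^ 2) hL2
    (fun i j hij => (hindep.comp (fun _ x => x ^ 2) fun _ => hsq).indepFun hij)
    fun i => (hident i).comp hsq
  rw [hμ] at h₁
  rw [integral_sq_eq_of_integral_sub_sq hmemLp hμ hσ] at h₂
  filter_upwards [h₁, h₂] with ω h₁ω h₂ω
  convert tendsto_det_div_pow_four h₁ω h₂ω using 2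
  ring

/-- For an i.i.d. nonnegative square-integrable sequence with mean μ > 0 and variance σ²,
with X_n = ε_1 + ⋯ + ε_n (here `ε j` stands for ε_{j+1}, `X j = ∑_{i<j} ε i`), the
determinant D_n = ΣX_{k-2}² Σε_{k-1}² − (ΣX_{k-2}ε_{k-1})² satisfies
n⁻⁴ D_n → μ²(4σ²+μ²)/12 almost surely. -/
theorem stmt6 {Ω : Type*} [MeasurableSpace Ω] (P : Measure Ω) [IsProbabilityMeasure P]
    (ε : ℕ → Ω → ℝ) (hmeas : ∀ i, Measurable (ε i))
    (hindep : iIndepFun ε P)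
    (hident : ∀ i, IdentDistrib (ε i) (ε 0) P P)
    (hpos : ∀ i ω, 0 ≤ ε i ω)
    (hL2 : Integrable (fun ω => (ε 0 ω)^2) P)
    (μ σ : ℝ) (hμ : ∫ ω, ε 0 ω ∂P = μ) (hμpos : 0 < μ)
    (hσ : ∫ ω, (ε 0 ω - μ)^2 ∂P = σ^2) :
    ∀ᵐ ω ∂P, Tendsto (fun n : ℕ =>
        ((∑ j ∈ Finset.range (n-1), (∑ i ∈ Finset.range j, ε i ω)^2)
            * (∑ j ∈ Finset.range (n-1), (ε j ω)^2)
          - (∑ j ∈ Finset.range (n-1), (∑ i ∈ Finset.range j, ε i ω) * ε j ω)^2) / (n:ℝ)^4)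
      atTop (𝓝 (μ^2 * (4*σ^2 + μ^2) / 12)) :=
  stmt6_general P ε hindep hident hL2 μ σ hμ hσ
end

section
/- Let (S, d_S) and (T, d_T) be metric spaces, (ξ_n) random elements of S converging in distribution to ξ, and f, f_n : S → T measurable maps. Suppose C ∈ B(S) satisfies P(ξ ∈ C) = 1 and: whenever s_n → s in S with s ∈ C, one has f_n(s_n) → f(s) in T. Then f_n(ξ_n) converges in distribution to f(ξ). -/
/-!
For a closed `K ⊆ T` put `Aₘ = closure (⋃ n ≥ m, fₙ⁻¹' K)`. Since `fₙ⁻¹' K ⊆ Aₘ` for `n ≥ m`,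
the portmanteau theorem gives `limsup P(fₙ(ξₙ) ∈ K) ≤ P(ξ ∈ Aₘ)` for every `m`, hence
`≤ P(ξ ∈ ⋂ₘ Aₘ)`. The sequential hypothesis yields the joint convergence
`fₙ(s) → f(s₀)` as `n → ∞` and `s → s₀`, so `f` maps `C ∩ ⋂ₘ Aₘ` into `K`. As `ξ ∈ C` almost
surely, `limsup P(fₙ(ξₙ) ∈ K) ≤ P(f(ξ) ∈ K)`, which is the closed-set criterion for weak
convergence.
-/

open MeasureTheory Filter Topology BoundedContinuousFunction

theorem tendsto_extend_const_nhds {X : Type*} [TopologicalSpace X] {φ : ℕ → ℕ}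
    (hφ : StrictMono φ) {t : ℕ → X} {x : X} (ht : Tendsto t atTop (𝓝 x)) :
    Tendsto (Function.extend φ t fun _ ↦ x) atTop (𝓝 x) := by
  intro U hU
  obtain ⟨K, hK⟩ := eventually_atTop.1 (ht hU)
  refine eventually_atTop.2 ⟨φ K, fun n hn ↦ ?_⟩
  by_cases hn' : ∃ j, φ j = n
  · obtain ⟨j, rfl⟩ := hn'
    rw [hφ.injective.extend_apply]
    exact hK j (hφ.le_iff_le.1 hn)
  · rw [Function.extend_apply' _ _ _ hn']
    exact mem_of_mem_nhds hU

/-- A subsequence `(nⱼ, sⱼ)` with `nⱼ` strictly increasing is glued into the full sequence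
`s` with `s nⱼ = sⱼ` and `s n = x` elsewhere. -/
theorem tendsto_uncurry_atTop_prod_nhds_of_seq {X Y : Type*} [TopologicalSpace X]
    [FirstCountableTopology X] [TopologicalSpace Y] {F : ℕ → X → Y} {x : X} {y : Y}
    (h : ∀ s : ℕ → X, Tendsto s atTop (𝓝 x) → Tendsto (fun n ↦ F n (s n)) atTop (𝓝 y)) :
    Tendsto (Function.uncurry F) (atTop ×ˢ 𝓝 x) (𝓝 y) := by
  refine tendsto_of_subseq_tendsto fun p hp ↦ ?_
  obtain ⟨φ, hφ, hfst⟩ := strictMono_subseq_of_tendsto_atTop (tendsto_fst.comp hp)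
  have hsnd : Tendsto (fun j ↦ (p (φ j)).2) atTop (𝓝 x) :=
    tendsto_snd.comp (hp.comp hφ.tendsto_atTop)
  refine ⟨φ, ((h _ (tendsto_extend_const_nhds hfst hsnd)).comp hfst.tendsto_atTop).congr
    fun j ↦ congrArg (F _) (hfst.injective.extend_apply _ _ j)⟩

theorem frequently_atTop_prod_nhds_of_mem_iInter_closure {X : Type*} [TopologicalSpace X]
    {A : ℕ → Set X} {x : X} (hx : x ∈ ⋂ m, closure (⋃ n ≥ m, A n)) :
    ∃ᶠ p in atTop ×ˢ 𝓝 x, p.2 ∈ A p.1 := by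
  rw [Filter.Frequently, eventually_prod_iff]
  rintro ⟨pa, hpa, pb, hpb, hab⟩
  obtain ⟨m, hm⟩ := eventually_atTop.1 hpa
  obtain ⟨y, hy, hyA⟩ := mem_closure_iff_nhds.1 (Set.mem_iInter.1 hx m) _ hpb
  obtain ⟨n, hn, hyn⟩ : ∃ n ≥ m, y ∈ A n := by simpa using hyA
  exact hab (hm n hn) hy hyn

namespace MeasureTheory.ProbabilityMeasure

theorem tendsto_map_of_tendsto_uncurry {S T : Type*} [TopologicalSpace S] [MeasurableSpace S]
    [OpensMeasurableSpace S] [HasOuterApproxClosed S] [TopologicalSpace T] [MeasurableSpace T]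
    [OpensMeasurableSpace T] {μs : ℕ → ProbabilityMeasure S} {μ : ProbabilityMeasure S}
    (hμ : Tendsto μs atTop (𝓝 μ)) {F : ℕ → S → T} {f : S → T}
    (hF : ∀ n, AEMeasurable (F n) (μs n)) (hf : AEMeasurable f μ) {C : Set S}
    (hC : ∀ᵐ x ∂(μ : Measure S), x ∈ C)
    (hFf : ∀ x ∈ C, Tendsto (Function.uncurry F) (atTop ×ˢ 𝓝 x) (𝓝 (f x))) :
    Tendsto (fun n ↦ (μs n).map (hF n)) atTop (𝓝 (μ.map hf)) := by
  refine tendsto_of_forall_isClosed_limsup_le' fun K hK ↦ ?_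
  simp only [toMeasure_map, Measure.map_apply_of_aemeasurable (hF _) hK.measurableSet,
    Measure.map_apply_of_aemeasurable hf hK.measurableSet]
  set A : ℕ → Set S := fun m ↦ closure (⋃ n ≥ m, F n ⁻¹' K)
  have hA : Antitone A := fun m m' hm ↦
    closure_mono (Set.biUnion_subset_biUnion_left fun n hn ↦ hm.trans hn)
  have hlimsup (m : ℕ) :
      limsup (fun n ↦ (μs n : Measure S) (F n ⁻¹' K)) atTop ≤ (μ : Measure S) (A m) := by
    refine (limsup_le_limsup ?_).trans (limsup_measure_closed_le_of_tendsto hμ isClosed_closure)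
    filter_upwards [eventually_ge_atTop m] with n hn
    exact measure_mono
      (subset_closure.trans' (Set.subset_biUnion_of_mem (u := fun n ↦ F n ⁻¹' K) hn))
  have hAK : ⋂ m, A m ≤ᵐ[(μ : Measure S)] f ⁻¹' K := by
    filter_upwards [hC] with x hxC hxA
    exact hK.mem_of_frequently_of_tendsto (frequently_atTop_prod_nhds_of_mem_iInter_closure hxA)
      (hFf x hxC)
  calc limsup (fun n ↦ (μs n : Measure S) (F n ⁻¹' K)) atTop ≤ ⨅ m, (μ : Measure S) (A m) :=
        le_iInf hlimsup
    _ = (μ : Measure S) (⋂ m, A m) :=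
        (hA.measure_iInter (fun _ ↦ isClosed_closure.measurableSet.nullMeasurableSet)
          ⟨0, measure_ne_top _ _⟩).symm
    _ ≤ (μ : Measure S) (f ⁻¹' K) := measure_mono_ae hAK

variable {Ω S T : Type*} [MeasurableSpace Ω] [MeasurableSpace S] [MeasurableSpace T]

theorem map_map (P : ProbabilityMeasure Ω) {X : Ω → S} {g : S → T} (hX : AEMeasurable X P)
    (hg : AEMeasurable g (P.map hX)) : (P.map hX).map hg = P.map (hg.comp_aemeasurable hX) :=
  Subtype.ext (AEMeasurable.map_map_of_aemeasurable hg hX)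

theorem tendsto_map_iff_forall_integral_comp_tendsto [TopologicalSpace S]
    [OpensMeasurableSpace S] {ι : Type*} {l : Filter ι} (P : ProbabilityMeasure Ω)
    {X : ι → Ω → S} {Y : Ω → S} (hX : ∀ i, AEMeasurable (X i) P) (hY : AEMeasurable Y P) :
    Tendsto (fun i ↦ P.map (hX i)) l (𝓝 (P.map hY)) ↔
      ∀ g : S →ᵇ ℝ, Tendsto (fun i ↦ ∫ ω, g (X i ω) ∂P) l (𝓝 (∫ ω, g (Y ω) ∂P)) := by
  refine tendsto_iff_forall_integral_tendsto.trans (forall_congr' fun g ↦ ?_)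
  simp only [toMeasure_map, integral_map (hX _) g.continuous.aestronglyMeasurable,
    integral_map hY g.continuous.aestronglyMeasurable]

end MeasureTheory.ProbabilityMeasure

open ProbabilityMeasure in
/-- Extended continuous mapping theorem (Kallenberg, Thm 3.27): if ξₙ ⇒ ξ in the metric
space S (weak convergence of laws, expressed via bounded continuous test functions),
P(ξ ∈ C) = 1, and fₙ(sₙ) → f(s) whenever sₙ → s ∈ C, then fₙ(ξₙ) ⇒ f(ξ). -/
theorem stmt16 {Ω S T : Type*} [MeasurableSpace Ω]
    [MetricSpace S] [MeasurableSpace S] [BorelSpace S]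
    [MetricSpace T] [MeasurableSpace T] [BorelSpace T]
    (P : Measure Ω) [IsProbabilityMeasure P]
    (ξn : ℕ → Ω → S) (ξ : Ω → S)
    (hξn : ∀ n, Measurable (ξn n)) (hξ : Measurable ξ)
    (fn : ℕ → S → T) (f : S → T)
    (hfn : ∀ n, Measurable (fn n)) (hf : Measurable f)
    (C : Set S) (hC : MeasurableSet C) (hPC : P (ξ ⁻¹' C) = 1)
    (hcm : ∀ (s : ℕ → S) (s₀ : S), s₀ ∈ C → Tendsto s atTop (𝓝 s₀) →
      Tendsto (fun n => fn n (s n)) atTop (𝓝 (f s₀)))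
    (hconv : ∀ g : BoundedContinuousFunction S ℝ,
      Tendsto (fun n => ∫ ω, g (ξn n ω) ∂P) atTop (𝓝 (∫ ω, g (ξ ω) ∂P))) :
    ∀ g : BoundedContinuousFunction T ℝ,
      Tendsto (fun n => ∫ ω, g (fn n (ξn n ω)) ∂P) atTop (𝓝 (∫ ω, g (f (ξ ω)) ∂P)) := by
  let Pr : ProbabilityMeasure Ω := ⟨P, inferInstance⟩
  have hlaw : Tendsto (fun n ↦ Pr.map (hξn n).aemeasurable) atTop (𝓝 (Pr.map hξ.aemeasurable)) :=
    (tendsto_map_iff_forall_integral_comp_tendsto Pr _ _).2 hconv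
  have hξC : ∀ᵐ x ∂(Pr.map hξ.aemeasurable : Measure S), x ∈ C := by
    rw [toMeasure_map, ae_map_iff hξ.aemeasurable (p := (· ∈ C)) hC]
    exact (ae_mem_iff_measure_eq (hξ hC).nullMeasurableSet).2 (hPC.trans measure_univ.symm)
  have hlaw_comp := tendsto_map_of_tendsto_uncurry hlaw (fun n ↦ (hfn n).aemeasurable)
    hf.aemeasurable hξC fun x hx ↦ tendsto_uncurry_atTop_prod_nhds_of_seq (hcm · x hx)
  simp only [ProbabilityMeasure.map_map] at hlaw_comp
  exact (tendsto_map_iff_forall_integral_comp_tendsto Pr _ _).1 hlaw_comp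
end
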